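/- (Main Proposition: dual certificate implies exact recovery) Let X_r = Σ_{ℓ=1}^L α_ℓ u w(r_ℓ)^H with α_ℓ ∈ ℂ \ {0}, r_ℓ ∈ [0,1]^3 pairwise distinct, u ∈ ℂ^K with ‖u‖₂ = 1, let X_c = Σ_{q=1}^Q α'_q v w(c_q)^H with α'_q ∈ ℂ \ {0}, c_q ∈ [0,1]^3 pairwise distinct, v ∈ ℂ^{K'} with ‖v‖₂ = 1, and let y = B_r(X_r) + B_c(X_c). Write R = {r_1,…,r_L} and C = {c_1,…,c_Q}. Suppose there exists q ∈ ℂ^D such that the dual polynomials f_r(r) = B_r*(q) w(r) and f_c(c) = B_c*(q) w(c) satisfy: f_r(r_ℓ) = sign(α_ℓ)·u for all r_ℓ ∈ R; f_c(c_q) = sign(α'_q)·v for all c_q ∈ C; ‖f_r(r)‖₂ < 1 for all r ∈ [0,1]^3 \ R; and ‖f_c(c)‖₂ < 1 for all c ∈ [0,1]^3 \ C. Then (X_r, X_c) is an optimal solution of the atomic norm minimization problem: for every pair (Z_r, Z_c) of matrices admitting atomic decompositions with B_r(Z_r) + B_c(Z_c) = y, one has ‖X_r‖_{A_r} + ‖X_c‖_{A_c}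 ≤ ‖Z_r‖_{A_r} + ‖Z_c‖_{A_c}. -/

import Mathlib

open scoped BigOperators
open Matrix

noncomputable section

/-- Index set of size `D = Nr * M * P` with `M = 2N+1`, ordered as `p ⊗ d ⊗ b`. -/
abbrev Dix (Nr P N : ℕ) := Fin P × Fin (2 * N + 1) × Fin Nr

/-- Spatial steering vector `b(β) ∈ ℂ^{Nr}`, `b(β)[k] = exp(-2πi k β)`. -/
def bVec (Nr : ℕ) (β : ℝ) : Fin Nr → ℂ :=
  fun k => Complex.exp (-(2 * Real.pi * Complex.I * ((k : ℕ) : ℂ) * (β : ℂ)))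

/-- Delay steering vector `d(τ) ∈ ℂ^{M}`, `M = 2N+1`, entries `exp(-2πi n τ)`, `n = -N,…,N`. -/
def dVec (N : ℕ) (τ : ℝ) : Fin (2 * N + 1) → ℂ :=
  fun n => Complex.exp (-(2 * Real.pi * Complex.I * ((((n : ℕ) : ℤ) - (N : ℤ) : ℤ) : ℂ) * (τ : ℂ)))

/-- Doppler steering vector `p(ν) ∈ ℂ^{P}`, `p(ν)[p] = exp(-2πi p ν)`. -/
def pVec (P : ℕ) (ν : ℝ) : Fin P → ℂ :=
  fun p => Complex.exp (-(2 * Real.pi * Complex.I * ((p : ℕ) : ℂ) * (ν : ℂ)))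

/-- `w(r) = p(ν) ⊗ d(τ) ⊗ b(β) ∈ ℂ^D`, for `r = (τ, ν, β)`. -/
def wVec (Nr P N : ℕ) (r : ℝ × ℝ × ℝ) : Dix Nr P N → ℂ :=
  fun j => pVec P r.2.1 j.1 * dVec N r.1 j.2.1 * bVec Nr r.2.2 j.2.2

/-- The parameter cube `[0,1]^3`. -/
def cube : Set (ℝ × ℝ × ℝ) := Set.Icc ((0, 0, 0) : ℝ × ℝ × ℝ) (1, 1, 1)

/-- Euclidean (ℓ₂) norm of a complex vector. -/
def norm2 {ι : Type*} [Fintype ι] (u : ι → ℂ) : ℝ := Real.sqrt (∑ i, ‖u i‖ ^ 2)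

/-- Atom `u w^H ∈ ℂ^{K×D}`. -/
def atom {ι : Type*} (K : ℕ) (u : Fin K → ℂ) (w : ι → ℂ) : Matrix (Fin K) ι ℂ :=
  fun k j => u k * starRingEnd ℂ (w j)

/-- `sign(c) = c / |c|`. -/
def csign (c : ℂ) : ℂ := c / ((‖c‖ : ℝ) : ℂ)

/-- Atomic norm of `X ∈ ℂ^{K×D}` with respect to the atoms `u w(r)^H`. -/
def atomicNorm (Nr P N K : ℕ) (X : Matrix (Fin K) (Dix Nr P N) ℂ) : ℝ :=
  sInf { t | ∃ (L : ℕ) (α : Fin L → ℂ) (r : Fin L → ℝ × ℝ × ℝ) (u : Fin K → ℂ),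
    (∀ ℓ, r ℓ ∈ cube) ∧ norm2 u = 1 ∧
    X = ∑ ℓ, α ℓ • atom K u (wVec Nr P N (r ℓ)) ∧
    t = ∑ ℓ, ‖α ℓ‖ }

/-- Dual atomic norm `‖Y‖*_A = sup { |Tr(A^H Y)| : A an atom }`. -/
def dualAtomicNorm (Nr P N K : ℕ) (Y : Matrix (Fin K) (Dix Nr P N) ℂ) : ℝ :=
  sSup { t | ∃ (rr : ℝ × ℝ × ℝ) (u : Fin K → ℂ), rr ∈ cube ∧ norm2 u = 1 ∧
    t = ‖Matrix.trace ((atom K u (wVec Nr P N rr))ᴴ * Y)‖ }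

/-- `X` admits at least one atomic decomposition. -/
def hasAtomicDecomp (Nr P N K : ℕ) (X : Matrix (Fin K) (Dix Nr P N) ℂ) : Prop :=
  ∃ (L : ℕ) (α : Fin L → ℂ) (r : Fin L → ℝ × ℝ × ℝ) (u : Fin K → ℂ),
    (∀ ℓ, r ℓ ∈ cube) ∧ norm2 u = 1 ∧
    X = ∑ ℓ, α ℓ • atom K u (wVec Nr P N (r ℓ))

/-- The linear operator `B(X)[j] = Tr(G_j X)`. -/
def Bop {ι : Type*} [Fintype ι] {K : ℕ} (G : ι → Matrix ι (Fin K) ℂ)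
    (X : Matrix (Fin K) ι ℂ) : ι → ℂ := fun j => Matrix.trace (G j * X)

/-- The adjoint operator `B*(q) = Σ_j q[j] G_j^H`. -/
def Bstar {ι : Type*} [Fintype ι] {K : ℕ} (G : ι → Matrix ι (Fin K) ℂ)
    (q : ι → ℂ) : Matrix (Fin K) ι ℂ := ∑ j, q j • (G j)ᴴ

/-- Real inner product `⟨q, y⟩_ℝ = Re(y^H q)`. -/
def rInner {ι : Type*} [Fintype ι] (q y : ι → ℂ) : ℝ :=
  (∑ j, starRingEnd ℂ (y j) * q j).re

/-!
The certificate matrix `M = B*(q)` satisfies `‖M w(t)‖₂ ≤ 1` on the whole cube, so it pairs with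
every atom with modulus at most one and `Re Tr(Zᴴ M) ≤ ‖Z‖_A` for every `Z`. At the true parameters
`M w(r_ℓ) = sign(α_ℓ) u`, so `Tr(Xᴴ M) = Σ |α_ℓ| ≥ ‖X‖_A`. Finally
`Tr(Xᴴ B*(q))` only depends on the measurements `B(X)`, so the pair `(X_r, X_c)` and any feasible
`(Z_r, Z_c)` have the same total pairing `⟨y, q⟩` with the certificate.
-/

open scoped InnerProductSpace

lemma norm_csign_le_one (a : ℂ) : ‖csign a‖ ≤ 1 := by
  rw [csign, norm_div, Complex.norm_real, norm_norm]
  exact div_self_le_one _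

lemma conj_mul_csign (a : ℂ) : starRingEnd ℂ a * csign a = ‖a‖ := by
  rw [csign, mul_div_assoc', Complex.conj_mul', sq, mul_self_div_self]

section Euclidean

variable {ι : Type*} [Fintype ι]

lemma norm2_eq_norm_toLp (u : ι → ℂ) : norm2 u = ‖WithLp.toLp 2 u‖ := by
  rw [EuclideanSpace.norm_eq]; rfl

lemma inner_toLp_smul_self {u : ι → ℂ} (hu : norm2 u = 1) (s : ℂ) :
    ⟪WithLp.toLp 2 u, WithLp.toLp 2 (s • u)⟫_ℂ = s := by
  rw [WithLp.toLp_smul, inner_smul_right, inner_self_eq_norm_sq_to_K, ← norm2_eq_norm_toLp, hu]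
  simp

lemma trace_conjTranspose_atom_mul {K : ℕ} (u : Fin K → ℂ) (w : ι → ℂ)
    (M : Matrix (Fin K) ι ℂ) :
    trace ((atom K u w)ᴴ * M) = ⟪WithLp.toLp 2 u, WithLp.toLp 2 (M *ᵥ w)⟫_ℂ := by
  have hatom : atom K u w = vecMulVec u (star w) := rfl
  rw [hatom, conjTranspose_vecMulVec, star_star, vecMulVec_mul, trace_vecMulVec,
    EuclideanSpace.inner_toLp_toLp, dotProduct_comm, ← dotProduct_mulVec, dotProduct_comm]

lemma trace_conjTranspose_sum_atom_mul {K L : ℕ} (α : Fin L → ℂ) (u : Fin K → ℂ)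
    (w : Fin L → ι → ℂ) (M : Matrix (Fin K) ι ℂ) :
    trace ((∑ ℓ, α ℓ • atom K u (w ℓ))ᴴ * M)
      = ∑ ℓ, starRingEnd ℂ (α ℓ) * ⟪WithLp.toLp 2 u, WithLp.toLp 2 (M *ᵥ w ℓ)⟫_ℂ := by
  simp only [conjTranspose_sum, conjTranspose_smul, Matrix.sum_mul, smul_mul, trace_sum, trace_smul,
    trace_conjTranspose_atom_mul, smul_eq_mul, Complex.star_def]

lemma norm_trace_conjTranspose_sum_atom_mul_le {K L : ℕ} (α : Fin L → ℂ) {u : Fin K → ℂ}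
    (hu : norm2 u = 1) (w : Fin L → ι → ℂ) (M : Matrix (Fin K) ι ℂ)
    (hM : ∀ ℓ, norm2 (M *ᵥ w ℓ) ≤ 1) :
    ‖trace ((∑ ℓ, α ℓ • atom K u (w ℓ))ᴴ * M)‖ ≤ ∑ ℓ, ‖α ℓ‖ := by
  rw [trace_conjTranspose_sum_atom_mul]
  refine (norm_sum_le _ _).trans (Finset.sum_le_sum fun ℓ _ => ?_)
  have hinner : ‖⟪WithLp.toLp 2 u, WithLp.toLp 2 (M *ᵥ w ℓ)⟫_ℂ‖ ≤ 1 := by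
    calc _ ≤ norm2 u * norm2 (M *ᵥ w ℓ) := by
          rw [norm2_eq_norm_toLp, norm2_eq_norm_toLp]; exact norm_inner_le_norm _ _
      _ ≤ 1 := by rw [hu, one_mul]; exact hM ℓ
  rw [norm_mul, Complex.norm_conj]
  exact mul_le_of_le_one_right (norm_nonneg _) hinner

lemma trace_conjTranspose_sum_atom_mul_of_interpolates {K L : ℕ} (α : Fin L → ℂ)
    {u : Fin K → ℂ} (hu : norm2 u = 1) (w : Fin L → ι → ℂ) (M : Matrix (Fin K) ι ℂ)
    (hM : ∀ ℓ, M *ᵥ w ℓ = csign (α ℓ) • u) :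
    trace ((∑ ℓ, α ℓ • atom K u (w ℓ))ᴴ * M) = ((∑ ℓ, ‖α ℓ‖ : ℝ) : ℂ) := by
  simp only [trace_conjTranspose_sum_atom_mul, hM, inner_toLp_smul_self hu, conj_mul_csign,
    Complex.ofReal_sum]

lemma trace_conjTranspose_mul_Bstar {K : ℕ} (G : ι → Matrix ι (Fin K) ℂ) (q : ι → ℂ)
    (X : Matrix (Fin K) ι ℂ) :
    trace (Xᴴ * Bstar G q) = star (Bop G X) ⬝ᵥ q := by
  simp only [Bstar, Bop, Matrix.mul_sum, Matrix.mul_smul, trace_sum, trace_smul,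
    ← conjTranspose_mul, trace_conjTranspose, dotProduct, Pi.star_apply, smul_eq_mul, mul_comm]

lemma trace_conjTranspose_mul_Bstar_add {K K' : ℕ} (G : ι → Matrix ι (Fin K) ℂ)
    (A : ι → Matrix ι (Fin K') ℂ) (q : ι → ℂ) (X : Matrix (Fin K) ι ℂ)
    (Y : Matrix (Fin K') ι ℂ) :
    trace (Xᴴ * Bstar G q) + trace (Yᴴ * Bstar A q)
      = star (fun j => Bop G X j + Bop A Y j) ⬝ᵥ q := by
  rw [trace_conjTranspose_mul_Bstar, trace_conjTranspose_mul_Bstar, ← add_dotProduct, ← star_add]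
  rfl

end Euclidean

lemma norm2_le_one_of_interpolates {ι T : Type*} [Fintype ι] {L : ℕ} (f : T → ι → ℂ)
    (s : Set T) (r : Fin L → T) (α : Fin L → ℂ) {u : ι → ℂ} (hu : norm2 u = 1)
    (hon : ∀ ℓ, f (r ℓ) = csign (α ℓ) • u)
    (hoff : ∀ t ∈ s, t ∉ Set.range r → norm2 (f t) < 1) :
    ∀ t ∈ s, norm2 (f t) ≤ 1 := by
  intro t ht
  by_cases hr : t ∈ Set.range r
  · obtain ⟨ℓ, rfl⟩ := hr
    rw [hon, norm2_eq_norm_toLp, WithLp.toLp_smul, norm_smul, ← norm2_eq_norm_toLp, hu, mul_one]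
    exact norm_csign_le_one _
  · exact (hoff t ht hr).le

section AtomicNorm

variable {Nr P N K : ℕ}

lemma atomicNorm_le_sum_norm {L : ℕ} (α : Fin L → ℂ) {r : Fin L → ℝ × ℝ × ℝ}
    {u : Fin K → ℂ} (hr : ∀ ℓ, r ℓ ∈ cube) (hu : norm2 u = 1) :
    atomicNorm Nr P N K (∑ ℓ, α ℓ • atom K u (wVec Nr P N (r ℓ))) ≤ ∑ ℓ, ‖α ℓ‖ := by
  refine csInf_le ⟨0, ?_⟩ ⟨L, α, r, u, hr, hu, rfl, rfl⟩
  rintro t ⟨L, α, r, u, -, -, -, rfl⟩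
  positivity

lemma norm_trace_conjTranspose_mul_le_atomicNorm {M : Matrix (Fin K) (Dix Nr P N) ℂ}
    (hM : ∀ t ∈ cube, norm2 (M *ᵥ wVec Nr P N t) ≤ 1) {Z : Matrix (Fin K) (Dix Nr P N) ℂ}
    (hZ : hasAtomicDecomp Nr P N K Z) :
    ‖trace (Zᴴ * M)‖ ≤ atomicNorm Nr P N K Z := by
  obtain ⟨L, α, r, u, hr, hu, hZ⟩ := hZ
  refine le_csInf ⟨_, L, α, r, u, hr, hu, hZ, rfl⟩ ?_
  rintro t ⟨L, α, r, u, hr, hu, rfl, rfl⟩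
  exact norm_trace_conjTranspose_sum_atom_mul_le α hu _ M fun ℓ => hM _ (hr ℓ)

end AtomicNorm

theorem dual_certificate_implies_recovery_general (Nr P N K K' : ℕ)
    (G : Dix Nr P N → Matrix (Dix Nr P N) (Fin K) ℂ)
    (A : Dix Nr P N → Matrix (Dix Nr P N) (Fin K') ℂ)
    (L : ℕ) (α : Fin L → ℂ) (r : Fin L → ℝ × ℝ × ℝ) (u : Fin K → ℂ)
    (hr : ∀ ℓ, r ℓ ∈ cube)
    (hu : norm2 u = 1)
    (Q : ℕ) (α' : Fin Q → ℂ) (c : Fin Q → ℝ × ℝ × ℝ) (v : Fin K' → ℂ)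
    (hc : ∀ qq, c qq ∈ cube)
    (hv : norm2 v = 1)
    (Xr : Matrix (Fin K) (Dix Nr P N) ℂ)
    (hXr : Xr = ∑ ℓ, α ℓ • atom K u (wVec Nr P N (r ℓ)))
    (Xc : Matrix (Fin K') (Dix Nr P N) ℂ)
    (hXc : Xc = ∑ qq, α' qq • atom K' v (wVec Nr P N (c qq)))
    (y : Dix Nr P N → ℂ)
    (hy : y = fun j => Bop G Xr j + Bop A Xc j)
    (hcert : ∃ q : Dix Nr P N → ℂ,
      (∀ ℓ, Bstar G q *ᵥ wVec Nr P N (r ℓ) = csign (α ℓ) • u) ∧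
      (∀ qq, Bstar A q *ᵥ wVec Nr P N (c qq) = csign (α' qq) • v) ∧
      (∀ rr ∈ cube, rr ∉ Set.range r → norm2 (Bstar G q *ᵥ wVec Nr P N rr) < 1) ∧
      (∀ cc ∈ cube, cc ∉ Set.range c → norm2 (Bstar A q *ᵥ wVec Nr P N cc) < 1)) :
    ∀ (Zr : Matrix (Fin K) (Dix Nr P N) ℂ) (Zc : Matrix (Fin K') (Dix Nr P N) ℂ),
      hasAtomicDecomp Nr P N K Zr → hasAtomicDecomp Nr P N K' Zc →
      (fun j => Bop G Zr j + Bop A Zc j) = y →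
      atomicNorm Nr P N K Xr + atomicNorm Nr P N K' Xc
        ≤ atomicNorm Nr P N K Zr + atomicNorm Nr P N K' Zc := by
  obtain ⟨q, hGr, hAc, hGoff, hAoff⟩ := hcert
  intro Zr Zc hZr hZc hZy
  have hGle := norm2_le_one_of_interpolates (fun t => Bstar G q *ᵥ wVec Nr P N t) cube r α hu
    hGr hGoff
  have hAle := norm2_le_one_of_interpolates (fun t => Bstar A q *ᵥ wVec Nr P N t) cube c α' hv
    hAc hAoff
  have hpair : trace (Xrᴴ * Bstar G q) + trace (Xcᴴ * Bstar A q)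
      = trace (Zrᴴ * Bstar G q) + trace (Zcᴴ * Bstar A q) := by
    rw [trace_conjTranspose_mul_Bstar_add, trace_conjTranspose_mul_Bstar_add, hZy, hy]
  calc atomicNorm Nr P N K Xr + atomicNorm Nr P N K' Xc
      ≤ (∑ ℓ, ‖α ℓ‖) + ∑ qq, ‖α' qq‖ := by
        rw [hXr, hXc]
        exact add_le_add (atomicNorm_le_sum_norm α hr hu) (atomicNorm_le_sum_norm α' hc hv)
    _ = (trace (Xrᴴ * Bstar G q) + trace (Xcᴴ * Bstar A q)).re := by
        rw [hXr, hXc, trace_conjTranspose_sum_atom_mul_of_interpolates α hu _ _ hGr,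
          trace_conjTranspose_sum_atom_mul_of_interpolates α' hv _ _ hAc]
        simp
    _ = (trace (Zrᴴ * Bstar G q) + trace (Zcᴴ * Bstar A q)).re := by rw [hpair]
    _ ≤ atomicNorm Nr P N K Zr + atomicNorm Nr P N K' Zc := by
        rw [Complex.add_re]
        exact add_le_add
          ((Complex.re_le_norm _).trans (norm_trace_conjTranspose_mul_le_atomicNorm hGle hZr))
          ((Complex.re_le_norm _).trans (norm_trace_conjTranspose_mul_le_atomicNorm hAle hZc))

/-- **Main Proposition: dual certificate implies exact recovery.**
If there is `q` whose dual polynomials interpolate the sign patterns at the true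
parameters and are strictly bounded by one elsewhere on `[0,1]^3`, then `(X_r, X_c)`
is an optimal solution of the atomic norm minimization problem. -/
theorem dual_certificate_implies_recovery (Nr P N K K' : ℕ)
    (hNr : 0 < Nr) (hP : 0 < P) (hK : 0 < K) (hK' : 0 < K')
    (G : Dix Nr P N → Matrix (Dix Nr P N) (Fin K) ℂ)
    (A : Dix Nr P N → Matrix (Dix Nr P N) (Fin K') ℂ)
    (L : ℕ) (α : Fin L → ℂ) (r : Fin L → ℝ × ℝ × ℝ) (u : Fin K → ℂ)
    (hα : ∀ ℓ, α ℓ ≠ 0) (hr : ∀ ℓ, r ℓ ∈ cube) (hrdist : Function.Injective r)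
    (hu : norm2 u = 1)
    (Q : ℕ) (α' : Fin Q → ℂ) (c : Fin Q → ℝ × ℝ × ℝ) (v : Fin K' → ℂ)
    (hα' : ∀ qq, α' qq ≠ 0) (hc : ∀ qq, c qq ∈ cube) (hcdist : Function.Injective c)
    (hv : norm2 v = 1)
    (Xr : Matrix (Fin K) (Dix Nr P N) ℂ)
    (hXr : Xr = ∑ ℓ, α ℓ • atom K u (wVec Nr P N (r ℓ)))
    (Xc : Matrix (Fin K') (Dix Nr P N) ℂ)
    (hXc : Xc = ∑ qq, α' qq • atom K' v (wVec Nr P N (c qq)))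
    (y : Dix Nr P N → ℂ)
    (hy : y = fun j => Bop G Xr j + Bop A Xc j)
    (hcert : ∃ q : Dix Nr P N → ℂ,
      (∀ ℓ, Bstar G q *ᵥ wVec Nr P N (r ℓ) = csign (α ℓ) • u) ∧
      (∀ qq, Bstar A q *ᵥ wVec Nr P N (c qq) = csign (α' qq) • v) ∧
      (∀ rr ∈ cube, rr ∉ Set.range r → norm2 (Bstar G q *ᵥ wVec Nr P N rr) < 1) ∧
      (∀ cc ∈ cube, cc ∉ Set.range c → norm2 (Bstar A q *ᵥ wVec Nr P N cc) < 1)) :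
    ∀ (Zr : Matrix (Fin K) (Dix Nr P N) ℂ) (Zc : Matrix (Fin K') (Dix Nr P N) ℂ),
      hasAtomicDecomp Nr P N K Zr → hasAtomicDecomp Nr P N K' Zc →
      (fun j => Bop G Zr j + Bop A Zc j) = y →
      atomicNorm Nr P N K Xr + atomicNorm Nr P N K' Xc
        ≤ atomicNorm Nr P N K Zr + atomicNorm Nr P N K' Zc :=
  dual_certificate_implies_recovery_general Nr P N K K' G A L α r u hr hu Q α' c v hc hv Xr hXr Xc
    hXc y hy hcert
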